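/- Let (X,d,μ) be an η-Ahlfors regular quasi-metric measure space with η > 0 and triangular constant κ ≥ 1, and let ρ be the third order hypermetric induced by d. Then for every x ∈ X and every α > 0, the integral ∬_{{(y,z) ∈ X×X : ρ(x,y,z) < 1}} ρ(x,y,z)^{−α} dμ(y) dμ(z) is finite if and only if α < 2η. -/

import Mathlib

/-!
The hypermetric is comparable to `M(y,z) = max {d(x,y), d(x,z)}`: `ρ ≤ M ≤ 2κρ`, so the integral
is finite exactly when the same integral of `M` is. The sublevel sets `{M < t}` are products of
two balls, so their `μ ⊗ μ`-measure lies between `a² t^{2η}` and `A² t^{2η}`. For any function `g`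
whose sublevel sets have measure comparable to `t^θ`, cutting `{0 < g < R}` into the shells
`{R q^{k+1} ≤ g < R q^k}` bounds `∫ g^{-β}` above and below by multiples of the geometric series
`∑ₖ (R q^k)^{θ-β}`, which converges if and only if `β < θ`.
-/

open MeasureTheory ENNReal

/-- The third order hypermetric induced by `d`:
`ρ(x,y,z) = inf_{u ∈ X} max {d(x,u), d(y,u), d(z,u)}`. -/
noncomputable def hyperRho {X : Type*} (d : X → X → ℝ) (x y z : X) : ℝ :=
  ⨅ u : X, max (d x u) (max (d y u) (d z u))

/-- `d` is a quasi-metric on `X` with triangular constant `κ`. -/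
def IsQuasiMetric {X : Type*} (d : X → X → ℝ) (κ : ℝ) : Prop :=
  (∀ x y, 0 ≤ d x y) ∧ (∀ x y, (d x y = 0 ↔ x = y)) ∧ (∀ x y, d x y = d y x) ∧
    (∀ x y z, d x z ≤ κ * (d x y + d y z))

/-- `(X,d,μ)` is `η`-Ahlfors regular with constants `a ≤ A`. -/
def IsAhlfors {X : Type*} [MeasurableSpace X] (d : X → X → ℝ) (μ : Measure X)
    (η a A : ℝ) : Prop :=
  ∀ x : X, ∀ r : ℝ, 0 < r →
    ENNReal.ofReal (a * r ^ η) ≤ μ {y | d x y < r} ∧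
      μ {y | d x y < r} ≤ ENNReal.ofReal (A * r ^ η)

open Filter Topology Set

lemma ENNReal.rpow_neg_le_rpow_neg {s t : ℝ≥0∞} (h : s ≤ t) {β : ℝ} (hβ : 0 ≤ β) :
    t ^ (-β) ≤ s ^ (-β) := by
  rw [ENNReal.rpow_neg, ENNReal.rpow_neg]
  exact ENNReal.inv_le_inv.2 (ENNReal.rpow_le_rpow h hβ)

lemma tendsto_const_mul_rpow_nhdsGT_zero (C : ℝ) {θ : ℝ} (hθ : 0 < θ) :
    Tendsto (fun t : ℝ => C * t ^ θ) (𝓝[>] 0) (𝓝 0) := by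
  have hcont : Continuous fun t : ℝ => C * t ^ θ :=
    continuous_const.mul (Real.continuous_rpow_const hθ.le)
  have h := (hcont.tendsto 0).mono_left (nhdsWithin_le_nhds (s := Ioi (0 : ℝ)))
  simpa [Real.zero_rpow hθ.ne'] using h

lemma exists_mul_pow_succ_le_lt {R q x : ℝ} (hR : 0 < R) (hq0 : 0 < q) (hq1 : q < 1)
    (hx0 : 0 < x) (hxR : x < R) : ∃ k : ℕ, R * q ^ (k + 1) ≤ x ∧ x < R * q ^ k := by
  classical
  have hex : ∃ k : ℕ, R * q ^ (k + 1) ≤ x := by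
    obtain ⟨n, hn⟩ := exists_pow_lt_of_lt_one (div_pos hx0 hR) hq1
    refine ⟨n, ?_⟩
    calc R * q ^ (n + 1) ≤ R * q ^ n :=
        mul_le_mul_of_nonneg_left (pow_le_pow_of_le_one hq0.le hq1.le n.le_succ) hR.le
      _ ≤ x := by rw [lt_div_iff₀' hR] at hn; exact hn.le
  refine ⟨Nat.find hex, Nat.find_spec hex, ?_⟩
  cases h : Nat.find hex with
  | zero => simpa using hxR
  | succ m => exact not_le.1 (Nat.find_min hex (h ▸ m.lt_succ_self))

lemma iUnion_preimage_Ico_mul_pow {Y : Type*} (g : Y → ℝ) {R q : ℝ} (hR : 0 < R) (hq0 : 0 < q)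
    (hq1 : q < 1) :
    ⋃ k : ℕ, g ⁻¹' Ico (R * q ^ (k + 1)) (R * q ^ k) = {y | 0 < g y ∧ g y < R} := by
  ext y
  simp only [mem_iUnion, mem_preimage, mem_Ico]
  constructor
  · rintro ⟨k, hlo, hhi⟩
    exact ⟨lt_of_lt_of_le (by positivity) hlo,
      hhi.trans_le (mul_le_of_le_one_right hR.le (pow_le_one₀ hq0.le hq1.le))⟩
  · rintro ⟨h0, hR'⟩
    exact exists_mul_pow_succ_le_lt hR hq0 hq1 h0 hR'

lemma pairwise_disjoint_preimage_Ico_mul_pow {Y : Type*} (g : Y → ℝ) {R q : ℝ} (hR : 0 ≤ R)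
    (hq0 : 0 ≤ q) (hq1 : q ≤ 1) :
    Pairwise (Function.onFun Disjoint fun k : ℕ => g ⁻¹' Ico (R * q ^ (k + 1)) (R * q ^ k)) :=
  fun _ _ hij =>
    (((pow_right_anti₀ hq0 hq1).const_mul hR).pairwise_disjoint_on_Ico_succ hij).preimage g

section SublevelIntegrals

variable {Y : Type*} [MeasurableSpace Y] {ν : Measure Y} {g : Y → ℝ}

lemma measure_setOf_nonpos_eq_zero {C θ : ℝ} (hθ : 0 < θ)
    (hup : ∀ t, 0 < t → ν {y | g y < t} ≤ ENNReal.ofReal (C * t ^ θ)) :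
    ν {y | g y ≤ 0} = 0 := by
  have h := ENNReal.tendsto_ofReal (tendsto_const_mul_rpow_nhdsGT_zero C hθ)
  rw [ENNReal.ofReal_zero] at h
  refine le_antisymm (ge_of_tendsto h (eventually_nhdsWithin_of_forall fun t ht => ?_)) zero_le
  exact (measure_mono fun y (hy : g y ≤ 0) => hy.trans_lt ht).trans (hup t ht)

lemma setLIntegral_preimage_Ico_rpow_neg_le {r q β θ C : ℝ} (hr : 0 < r) (hq : 0 < q)
    (hβ : 0 ≤ β) (hup : ν {y | g y < r} ≤ ENNReal.ofReal (C * r ^ θ)) :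
    ∫⁻ y in g ⁻¹' Ico (r * q) r, ENNReal.ofReal (g y) ^ (-β) ∂ν ≤
      ENNReal.ofReal (C * q ^ (-β) * r ^ (θ - β)) := by
  calc ∫⁻ y in g ⁻¹' Ico (r * q) r, ENNReal.ofReal (g y) ^ (-β) ∂ν
      ≤ ∫⁻ _ in g ⁻¹' Ico (r * q) r, ENNReal.ofReal (r * q) ^ (-β) ∂ν :=
        setLIntegral_mono measurable_const fun y hy =>
          ENNReal.rpow_neg_le_rpow_neg (ENNReal.ofReal_le_ofReal hy.1) hβ
    _ = ENNReal.ofReal (r * q) ^ (-β) * ν (g ⁻¹' Ico (r * q) r) := setLIntegral_const _ _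
    _ ≤ ENNReal.ofReal (r * q) ^ (-β) * ENNReal.ofReal (C * r ^ θ) := by
        gcongr
        exact (measure_mono fun y hy => hy.2).trans hup
    _ = ENNReal.ofReal (C * q ^ (-β) * r ^ (θ - β)) := by
        rw [ENNReal.ofReal_rpow_of_pos (by positivity), ← ENNReal.ofReal_mul (by positivity),
          Real.mul_rpow hr.le hq.le, Real.rpow_sub hr, Real.rpow_neg hr.le]
        congr 1
        ring

lemma le_setLIntegral_preimage_Ico_rpow_neg (hg : Measurable g) {r q β θ c C : ℝ} (hr : 0 < r)
    (hq : 0 < q) (hβ : 0 ≤ β) (hC : 0 ≤ C)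
    (hlow : ENNReal.ofReal (c * r ^ θ) ≤ ν {y | g y < r})
    (hup : ν {y | g y < r * q} ≤ ENNReal.ofReal (C * (r * q) ^ θ)) :
    ENNReal.ofReal ((c - C * q ^ θ) * r ^ (θ - β)) ≤
      ∫⁻ y in g ⁻¹' Ico (r * q) r, ENNReal.ofReal (g y) ^ (-β) ∂ν := by
  calc ENNReal.ofReal ((c - C * q ^ θ) * r ^ (θ - β))
      = ENNReal.ofReal r ^ (-β) *
          (ENNReal.ofReal (c * r ^ θ) - ENNReal.ofReal (C * (r * q) ^ θ)) := by
        rw [ENNReal.ofReal_rpow_of_pos hr, ← ENNReal.ofReal_sub _ (by positivity),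
          ← ENNReal.ofReal_mul (by positivity), Real.mul_rpow hr.le hq.le,
          Real.rpow_sub hr, Real.rpow_neg hr.le]
        congr 1
        ring
    _ ≤ ENNReal.ofReal r ^ (-β) * (ν {y | g y < r} - ν {y | g y < r * q}) := by
        gcongr
    _ ≤ ENNReal.ofReal r ^ (-β) * ν (g ⁻¹' Ico (r * q) r) := by
        gcongr
        exact le_measure_sdiff.trans (measure_mono fun y hy => ⟨not_lt.1 hy.2, hy.1⟩)
    _ = ∫⁻ _ in g ⁻¹' Ico (r * q) r, ENNReal.ofReal r ^ (-β) ∂ν := (setLIntegral_const _ _).symm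
    _ ≤ ∫⁻ y in g ⁻¹' Ico (r * q) r, ENNReal.ofReal (g y) ^ (-β) ∂ν :=
        setLIntegral_mono' (hg measurableSet_Ico) fun y hy =>
          ENNReal.rpow_neg_le_rpow_neg (ENNReal.ofReal_le_ofReal hy.2.le) hβ

theorem setLIntegral_rpow_neg_lt_top {R β θ C : ℝ} (hR : 0 < R) (hβ : 0 ≤ β) (hβθ : β < θ)
    (hC : 0 ≤ C) (hup : ∀ t, 0 < t → ν {y | g y < t} ≤ ENNReal.ofReal (C * t ^ θ)) :
    ∫⁻ y in {y | g y < R}, ENNReal.ofReal (g y) ^ (-β) ∂ν < ⊤ := by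
  set q : ℝ := 2⁻¹
  have hq0 : 0 < q := by norm_num
  have hq1 : q < 1 := by norm_num
  set F : ℕ → ℝ := fun k => C * q ^ (-β) * (R * q ^ k) ^ (θ - β)
  have hF : F = fun k => C * q ^ (-β) * R ^ (θ - β) * (q ^ (θ - β)) ^ k := by
    ext k
    simp only [F, Real.mul_rpow hR.le (pow_nonneg hq0.le k), Real.rpow_pow_comm hq0.le]
    ring
  have hFsum : Summable F := hF ▸ (summable_geometric_of_lt_one (by positivity)
    (Real.rpow_lt_one hq0.le hq1 (sub_pos.2 hβθ))).mul_left _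
  have hsplit : {y | g y < R} ⊆
      {y | g y ≤ 0} ∪ ⋃ k : ℕ, g ⁻¹' Ico (R * q ^ (k + 1)) (R * q ^ k) := by
    rw [iUnion_preimage_Ico_mul_pow g hR hq0 hq1]
    intro y hy
    by_cases h : g y ≤ 0
    exacts [Or.inl h, Or.inr ⟨not_le.1 h, hy⟩]
  calc ∫⁻ y in {y | g y < R}, ENNReal.ofReal (g y) ^ (-β) ∂ν
      ≤ ∫⁻ y in {y | g y ≤ 0}, ENNReal.ofReal (g y) ^ (-β) ∂ν +
          ∫⁻ y in ⋃ k : ℕ, g ⁻¹' Ico (R * q ^ (k + 1)) (R * q ^ k),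
            ENNReal.ofReal (g y) ^ (-β) ∂ν :=
        (lintegral_mono_set hsplit).trans (lintegral_union_le _ _ _)
    _ ≤ ∑' k : ℕ, ∫⁻ y in g ⁻¹' Ico (R * q ^ (k + 1)) (R * q ^ k),
          ENNReal.ofReal (g y) ^ (-β) ∂ν := by
        rw [setLIntegral_measure_zero _ _ (measure_setOf_nonpos_eq_zero (hβ.trans_lt hβθ) hup),
          zero_add]
        exact lintegral_iUnion_le _ _
    _ ≤ ∑' k, ENNReal.ofReal (F k) := by
        refine ENNReal.tsum_le_tsum fun k => ?_
        rw [pow_succ, ← mul_assoc]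
        exact setLIntegral_preimage_Ico_rpow_neg_le (by positivity) hq0 hβ (hup _ (by positivity))
    _ = ENNReal.ofReal (∑' k, F k) :=
        (ENNReal.ofReal_tsum_of_nonneg (fun _ => by positivity) hFsum).symm
    _ < ⊤ := ENNReal.ofReal_lt_top

theorem setLIntegral_rpow_neg_eq_top (hg : Measurable g) {R β θ c C : ℝ} (hR : 0 < R)
    (hθ : 0 < θ) (hθβ : θ ≤ β) (hc : 0 < c) (hC : 0 ≤ C)
    (hlow : ∀ t, 0 < t → ENNReal.ofReal (c * t ^ θ) ≤ ν {y | g y < t})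
    (hup : ∀ t, 0 < t → ν {y | g y < t} ≤ ENNReal.ofReal (C * t ^ θ)) :
    ∫⁻ y in {y | g y < R}, ENNReal.ofReal (g y) ^ (-β) ∂ν = ⊤ := by
  -- Small `q` makes each shell carry at least half of the lower mass bound.
  obtain ⟨q, hqC, hq0, hq1⟩ : ∃ q, C * q ^ θ < c / 2 ∧ 0 < q ∧ q < 1 :=
    (((tendsto_const_mul_rpow_nhdsGT_zero C hθ).eventually (gt_mem_nhds (half_pos hc))).and
      (Ioo_mem_nhdsGT one_pos)).exists
  have hshell : ∀ k : ℕ, ENNReal.ofReal (c / 2 * R ^ (θ - β)) ≤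
      ∫⁻ y in g ⁻¹' Ico (R * q ^ (k + 1)) (R * q ^ k), ENNReal.ofReal (g y) ^ (-β) ∂ν := by
    intro k
    have hr : 0 < R * q ^ k := by positivity
    rw [pow_succ, ← mul_assoc]
    refine le_trans (ENNReal.ofReal_le_ofReal ?_) (le_setLIntegral_preimage_Ico_rpow_neg hg hr hq0
      (hθ.le.trans hθβ) hC (hlow _ hr) (hup _ (by positivity)))
    refine mul_le_mul (by linarith) ?_ (by positivity) (by linarith)
    exact Real.rpow_le_rpow_of_nonpos hr
      (mul_le_of_le_one_right hR.le (pow_le_one₀ hq0.le hq1.le)) (by linarith)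
  refine top_le_iff.1 ?_
  calc (⊤ : ℝ≥0∞) = ∑' _ : ℕ, ENNReal.ofReal (c / 2 * R ^ (θ - β)) :=
        (ENNReal.tsum_const_eq_top_of_ne_zero (by positivity)).symm
    _ ≤ ∑' k : ℕ, ∫⁻ y in g ⁻¹' Ico (R * q ^ (k + 1)) (R * q ^ k),
          ENNReal.ofReal (g y) ^ (-β) ∂ν := ENNReal.tsum_le_tsum hshell
    _ = ∫⁻ y in ⋃ k : ℕ, g ⁻¹' Ico (R * q ^ (k + 1)) (R * q ^ k),
          ENNReal.ofReal (g y) ^ (-β) ∂ν :=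
        (lintegral_iUnion (fun _ => hg measurableSet_Ico)
          (pairwise_disjoint_preimage_Ico_mul_pow g hR.le hq0.le hq1.le) _).symm
    _ ≤ ∫⁻ y in {y | g y < R}, ENNReal.ofReal (g y) ^ (-β) ∂ν := by
        rw [iUnion_preimage_Ico_mul_pow g hR hq0 hq1]
        exact lintegral_mono_set fun y hy => hy.2

theorem setLIntegral_rpow_neg_lt_top_iff (hg : Measurable g) {R β θ c C : ℝ} (hR : 0 < R)
    (hβ : 0 ≤ β) (hθ : 0 < θ) (hc : 0 < c) (hC : 0 ≤ C)
    (hlow : ∀ t, 0 < t → ENNReal.ofReal (c * t ^ θ) ≤ ν {y | g y < t})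
    (hup : ∀ t, 0 < t → ν {y | g y < t} ≤ ENNReal.ofReal (C * t ^ θ)) :
    ∫⁻ y in {y | g y < R}, ENNReal.ofReal (g y) ^ (-β) ∂ν < ⊤ ↔ β < θ :=
  ⟨fun hfin => lt_of_not_ge fun hθβ =>
      hfin.ne (setLIntegral_rpow_neg_eq_top hg hR hθ hθβ hc hC hlow hup),
    fun hβθ => setLIntegral_rpow_neg_lt_top hR hβ hβθ hC hup⟩

lemma setLIntegral_rpow_neg_le_of_le_mul {f h : Y → ℝ} {K R β : ℝ} (hK : 0 < K) (hβ : 0 ≤ β)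
    (hhf : ∀ y, h y ≤ K * f y) :
    ∫⁻ y in {y | f y < R}, ENNReal.ofReal (f y) ^ (-β) ∂ν ≤
      ENNReal.ofReal K ^ β * ∫⁻ y in {y | h y < K * R}, ENNReal.ofReal (h y) ^ (-β) ∂ν := by
  have hK0 : ENNReal.ofReal K ^ β ≠ 0 := (ENNReal.rpow_pos_of_nonneg (by simpa using hK) hβ).ne'
  have hKtop : ENNReal.ofReal K ^ β ≠ ⊤ := ENNReal.rpow_ne_top_of_nonneg hβ ENNReal.ofReal_ne_top
  rw [← lintegral_const_mul' _ _ hKtop]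
  refine lintegral_mono' (Measure.restrict_mono
    (fun y (hy : f y < R) => (hhf y).trans_lt (mul_lt_mul_of_pos_left hy hK)) le_rfl) fun y => ?_
  calc ENNReal.ofReal (f y) ^ (-β)
      = ENNReal.ofReal K ^ β * (ENNReal.ofReal K * ENNReal.ofReal (f y)) ^ (-β) := by
        rw [ENNReal.mul_rpow_of_ne_top ENNReal.ofReal_ne_top ENNReal.ofReal_ne_top, ← mul_assoc,
          ENNReal.rpow_neg (ENNReal.ofReal K), ENNReal.mul_inv_cancel hK0 hKtop, one_mul]
    _ ≤ ENNReal.ofReal K ^ β * ENNReal.ofReal (h y) ^ (-β) := by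
        refine mul_le_mul_right (ENNReal.rpow_neg_le_rpow_neg ?_ hβ) _
        rw [← ENNReal.ofReal_mul hK.le]
        exact ENNReal.ofReal_le_ofReal (hhf y)

end SublevelIntegrals

section QuasiMetric

variable {X : Type*} {d : X → X → ℝ} {κ : ℝ}

lemma IsQuasiMetric.hyperRho_le_max (hqm : IsQuasiMetric d κ) (x y z : X) :
    hyperRho d x y z ≤ max (d x y) (d x z) := by
  obtain ⟨hnonneg, hzero, hsymm, -⟩ := hqm
  have hbdd : BddBelow (range fun u => max (d x u) (max (d y u) (d z u))) :=
    ⟨0, by rintro _ ⟨u, rfl⟩; exact (hnonneg x u).trans (le_max_left _ _)⟩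
  refine (ciInf_le hbdd x).trans_eq ?_
  rw [(hzero x x).2 rfl, hsymm y x, hsymm z x, max_eq_right (le_max_of_le_left (hnonneg x y))]

lemma IsQuasiMetric.max_le_hyperRho (hqm : IsQuasiMetric d κ) (hκ : 0 ≤ κ) (x y z : X) :
    max (d x y) (d x z) ≤ 2 * κ * hyperRho d x y z := by
  obtain ⟨-, -, hsymm, htri⟩ := hqm
  have : Nonempty X := ⟨x⟩
  rw [hyperRho, Real.mul_iInf_of_nonneg (by positivity)]
  refine le_ciInf fun u => ?_
  have hx := le_max_left (d x u) (max (d y u) (d z u))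
  have hy := (le_max_left (d y u) (d z u)).trans (le_max_right (d x u) _)
  have hz := (le_max_right (d y u) (d z u)).trans (le_max_right (d x u) _)
  refine max_le ((htri x u y).trans ?_) ((htri x u z).trans ?_)
  · rw [hsymm u y]; nlinarith
  · rw [hsymm u z]; nlinarith

end QuasiMetric

section Ahlfors

variable {X : Type*} [MeasurableSpace X] {d : X → X → ℝ} {μ : Measure X} {η a A : ℝ}

lemma IsAhlfors.sigmaFinite (h : IsAhlfors d μ η a A) (x : X) : SigmaFinite μ := by
  refine Measure.sigmaFinite_of_countable (countable_range fun n : ℕ => {y | d x y < n + 1})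
    ?_ ?_
  · rintro _ ⟨n, rfl⟩
    exact (h x (n + 1) (by positivity)).2.trans_lt ENNReal.ofReal_lt_top
  · refine sUnion_range _ ▸ eq_univ_of_forall fun y => mem_iUnion.2 ?_
    obtain ⟨n, hn⟩ := exists_nat_gt (d x y)
    exact ⟨n, show d x y < n + 1 by linarith⟩

lemma ENNReal.ofReal_mul_rpow_mul_self {b t : ℝ} (hb : 0 ≤ b) (ht : 0 < t) (η : ℝ) :
    ENNReal.ofReal (b * t ^ η) * ENNReal.ofReal (b * t ^ η) =
      ENNReal.ofReal (b * b * t ^ (2 * η)) := by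
  rw [← ENNReal.ofReal_mul (by positivity), two_mul, Real.rpow_add ht]
  ring_nf

lemma IsAhlfors.prod_measure_max_lt [SFinite μ] (h : IsAhlfors d μ η a A) (ha : 0 ≤ a)
    (hA : 0 ≤ A) (x : X) {t : ℝ} (ht : 0 < t) :
    ENNReal.ofReal (a * a * t ^ (2 * η)) ≤ μ.prod μ {p | max (d x p.1) (d x p.2) < t} ∧
      μ.prod μ {p | max (d x p.1) (d x p.2) < t} ≤ ENNReal.ofReal (A * A * t ^ (2 * η)) := by
  have hprod : {p : X × X | max (d x p.1) (d x p.2) < t} =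
      {y | d x y < t} ×ˢ {y | d x y < t} := by
    ext p
    simp
  rw [hprod, Measure.prod_prod, ← ENNReal.ofReal_mul_rpow_mul_self ha ht,
    ← ENNReal.ofReal_mul_rpow_mul_self hA ht]
  exact ⟨mul_le_mul' (h x t ht).1 (h x t ht).1, mul_le_mul' (h x t ht).2 (h x t ht).2⟩

end Ahlfors

/-- `∬_{ρ(x,y,z)<1} ρ(x,y,z)^{-α} dμ dμ` is finite if and only if `α < 2η`. -/
theorem statement12 {X : Type*} [MeasurableSpace X]
    (d : X → X → ℝ) (κ : ℝ) (hκ : 1 ≤ κ) (hqm : IsQuasiMetric d κ)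
    (hd_meas : Measurable fun p : X × X => d p.1 p.2)
    (μ : Measure X) (η : ℝ) (hη : 0 < η)
    (a A : ℝ) (ha : 0 < a) (haA : a ≤ A) (hAhl : IsAhlfors d μ η a A)
    (x : X) (α : ℝ) (hα : 0 < α) :
    (∫⁻ p in {p : X × X | hyperRho d x p.1 p.2 < 1},
        (ENNReal.ofReal (hyperRho d x p.1 p.2)) ^ (-α) ∂(μ.prod μ)) < ⊤ ↔
      α < 2 * η := by
  have := hAhl.sigmaFinite x
  set M : X × X → ℝ := fun p => max (d x p.1) (d x p.2)
  have hdx : Measurable (d x) := hd_meas.comp measurable_prodMk_left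
  have hM : Measurable M := (hdx.comp measurable_fst).max (hdx.comp measurable_snd)
  have hM_iff {R : ℝ} (hR : 0 < R) :
      ∫⁻ p in {p | M p < R}, ENNReal.ofReal (M p) ^ (-α) ∂(μ.prod μ) < ⊤ ↔ α < 2 * η :=
    setLIntegral_rpow_neg_lt_top_iff hM hR hα.le (by positivity) (mul_pos ha ha)
      (mul_self_nonneg A) (fun t ht => (hAhl.prod_measure_max_lt ha.le (ha.le.trans haA) x ht).1)
      (fun t ht => (hAhl.prod_measure_max_lt ha.le (ha.le.trans haA) x ht).2)
  constructor
  · intro hfin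
    refine (hM_iff one_pos).1 (lt_of_le_of_lt ?_ (by simpa using hfin))
    simpa using setLIntegral_rpow_neg_le_of_le_mul (ν := μ.prod μ) (R := 1) one_pos hα.le
      fun p => (hqm.hyperRho_le_max x p.1 p.2).trans_eq (one_mul (M p)).symm
  · intro hlt
    have h2κ : 0 < 2 * κ := by linarith
    refine (setLIntegral_rpow_neg_le_of_le_mul h2κ hα.le
      fun p : X × X => hqm.max_le_hyperRho (by linarith) x p.1 p.2).trans_lt ?_
    exact ENNReal.mul_lt_top (ENNReal.rpow_lt_top_of_nonneg hα.le ENNReal.ofReal_ne_top)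
      ((hM_iff (by linarith)).2 hlt)
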